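/- arXiv:2506.21301 — 3 statements merged into one kernel-verified Lean document; each statement's English description precedes it below -/
import Mathlib

section
/- For every positive integer m there exist m distinct primes p_1, …, p_m, each congruent to 1 modulo 4, such that the Legendre symbol (−p_j / p_i) equals −1 for every pair of indices i ≠ j. -/
/-!
Induction on the number of primes. Given primes `p₁, …, p_k ≡ 1 (mod 4)`, pick a quadratic
nonresidue modulo each `pᵢ`; by the Chinese remainder theorem and Dirichlet's theorem there is a
prime `q ≡ 1 (mod 4)` that is a nonresidue modulo every `pᵢ`. Quadratic reciprocity turns
`(q / pᵢ) = -1` into `(pᵢ / q) = -1`, and `(-1 / p) = 1` for `p ≡ 1 (mod 4)` lets the sign in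
`(-pⱼ / pᵢ)` be ignored.
-/

theorem jacobiSym_neg_of_mod_four_eq_one (a : ℤ) {b : ℕ} (hb : b % 4 = 1) :
    jacobiSym (-a) b = jacobiSym a b := by
  rw [jacobiSym.neg a (Nat.odd_iff.mpr (by omega)), ZMod.χ₄_nat_one_mod_four hb, one_mul]

theorem jacobiSym_congr_left {a b n : ℕ} (h : a ≡ b [MOD n]) :
    jacobiSym a n = jacobiSym b n :=
  jacobiSym.mod_left' (Int.natCast_modEq_iff.mpr h)

theorem Nat.Coprime.of_jacobiSym_eq_neg_one {a b : ℕ} (h : jacobiSym a b = -1) :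
    a.Coprime b := by
  by_contra hab
  have hzero : jacobiSym a b = 0 :=
    jacobiSym.eq_zero_iff.mpr ⟨fun hb ↦ by simp [hb] at h, by rwa [Int.gcd_natCast_natCast]⟩
  rw [h] at hzero
  norm_num at hzero

theorem exists_jacobiSym_eq_neg_one {p : ℕ} (hp : p.Prime) (hp2 : p ≠ 2) :
    ∃ x : ℕ, jacobiSym x p = -1 := by
  have := Fact.mk hp
  obtain ⟨a, ha⟩ := FiniteField.exists_nonsquare (F := ZMod p) (by rwa [ZMod.ringChar_zmod_n])
  refine ⟨a.val, ?_⟩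
  rw [← jacobiSym.legendreSym.to_jacobiSym, legendreSym.eq_neg_one_iff', ZMod.natCast_zmod_val]
  exact ha

theorem exists_modEq_one_four_forall_jacobiSym_eq_neg_one {S : Finset ℕ}
    (hS : ∀ p ∈ S, p.Prime ∧ p ≠ 2) :
    ∃ n : ℕ, n ≡ 1 [MOD 4] ∧ ∀ p ∈ S, jacobiSym n p = -1 := by
  choose! x hx using fun p (hp : p ∈ S) ↦ exists_jacobiSym_eq_neg_one (hS p hp).1 (hS p hp).2
  have h4 : 4 ∉ S := fun h ↦ absurd (hS 4 h).1 (by norm_num)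
  have hne : ∀ d ∈ insert 4 S, id d ≠ 0 := by
    simpa using fun p hp ↦ (hS p hp).1.ne_zero
  have hcop : Set.Pairwise (insert 4 S : Finset ℕ) (Function.onFun Nat.Coprime id) := by
    have h4p : ∀ p ∈ S, Nat.Coprime 4 p := fun p hp ↦
      (Nat.coprime_two_left.mpr ((hS p hp).1.odd_of_ne_two (hS p hp).2)).pow_left 2
    rw [Finset.coe_insert, Set.pairwise_insert]
    refine ⟨fun p hp q hq hpq ↦ (Nat.coprime_primes (hS p hp).1 (hS q hq).1).mpr hpq,
      fun p hp _ ↦ ⟨h4p p hp, (h4p p hp).symm⟩⟩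
  obtain ⟨n, hn⟩ := Nat.chineseRemainderOfFinset (fun d ↦ if d = 4 then 1 else x d) id
    (insert 4 S) hne hcop
  refine ⟨n, by simpa using hn 4 (Finset.mem_insert_self 4 S), fun p hp ↦ ?_⟩
  have hp4 : p ≠ 4 := by rintro rfl; exact h4 hp
  have hnp := hn p (Finset.mem_insert_of_mem hp)
  simp only [hp4, if_false, id] at hnp
  rw [jacobiSym_congr_left hnp, hx p hp]

theorem exists_prime_mod_four_eq_one_forall_jacobiSym_eq_neg_one {S : Finset ℕ}
    (hS : ∀ p ∈ S, p.Prime ∧ p ≠ 2) :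
    ∃ q : ℕ, q.Prime ∧ q % 4 = 1 ∧ ∀ p ∈ S, jacobiSym q p = -1 := by
  obtain ⟨n, hn4, hnS⟩ := exists_modEq_one_four_forall_jacobiSym_eq_neg_one hS
  have hcop : n.Coprime (4 * ∏ p ∈ S, p) :=
    Nat.Coprime.mul_right (by simpa using hn4.gcd_eq)
      (Nat.Coprime.prod_right fun p hp ↦ Nat.Coprime.of_jacobiSym_eq_neg_one (hnS p hp))
  obtain ⟨q, -, hq, hqn⟩ := Nat.forall_exists_prime_gt_and_modEq 0
    (mul_ne_zero four_ne_zero (Finset.prod_ne_zero_iff.mpr fun p hp ↦ (hS p hp).1.ne_zero)) hcop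
  refine ⟨q, hq, (hqn.of_mul_right _).trans hn4, fun p hp ↦ ?_⟩
  have hpN : p ∣ 4 * ∏ p ∈ S, p := dvd_mul_of_dvd_right (Finset.dvd_prod_of_mem _ hp) 4
  rw [jacobiSym_congr_left (hqn.of_dvd hpN), hnS p hp]

theorem exists_finset_prime_mod_four_eq_one_pairwise_jacobiSym_neg_eq_neg_one (k : ℕ) :
    ∃ S : Finset ℕ, S.card = k ∧ (∀ p ∈ S, p.Prime ∧ p % 4 = 1) ∧
      (S : Set ℕ).Pairwise fun p q ↦ jacobiSym (-q) p = -1 := by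
  induction k with
  | zero => exact ⟨∅, rfl, by simp, by simp⟩
  | succ k ih =>
    obtain ⟨S, hcard, hS, hpair⟩ := ih
    obtain ⟨q, hq, hq4, hqS⟩ := exists_prime_mod_four_eq_one_forall_jacobiSym_eq_neg_one
      fun p hp ↦ ⟨(hS p hp).1, by have := (hS p hp).2; omega⟩
    have hq_notMem : q ∉ S := fun h ↦ by
      have hqq := hqS q h
      rw [jacobiSym.mod_left, Int.emod_self, jacobiSym.zero_left hq.one_lt] at hqq
      norm_num at hqq
    refine ⟨insert q S, by rw [Finset.card_insert_of_notMem hq_notMem, hcard],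
      fun p hp ↦ ?_, ?_⟩
    · rcases Finset.mem_insert.mp hp with rfl | hp
      exacts [⟨hq, hq4⟩, hS p hp]
    · rw [Finset.coe_insert, Set.pairwise_insert]
      refine ⟨hpair, fun p hp _ ↦ ?_⟩
      have hp4 := (hS p hp).2
      have hqp := hqS p hp
      rw [jacobiSym.quadratic_reciprocity_one_mod_four' (Nat.odd_iff.mpr (by omega)) hp4] at hqp
      rw [jacobiSym_neg_of_mod_four_eq_one _ hq4, jacobiSym_neg_of_mod_four_eq_one _ hp4]
      exact ⟨hqp, hqS p hp⟩

theorem stmt4_general (m : ℕ) :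
    ∃ P : Fin m → ℕ, Function.Injective P ∧
      (∀ i, (P i).Prime ∧ P i % 4 = 1) ∧
      ∀ i j, i ≠ j → jacobiSym (-(P j : ℤ)) (P i) = -1 := by
  obtain ⟨S, hcard, hS, hpair⟩ :=
    exists_finset_prime_mod_four_eq_one_pairwise_jacobiSym_neg_eq_neg_one m
  let P := S.orderEmbOfFin hcard
  exact ⟨P, P.injective, fun i ↦ hS _ (S.orderEmbOfFin_mem hcard i),
    fun i j hij ↦ hpair (S.orderEmbOfFin_mem hcard i) (S.orderEmbOfFin_mem hcard j)
      (P.injective.ne hij)⟩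

/-- For every positive integer `m` there exist `m` distinct primes `p₁, …, p_m`, each
`≡ 1 (mod 4)`, such that the Legendre symbol `(−p_j / p_i)` equals `−1` whenever `i ≠ j`.
(For a prime `p`, the Legendre symbol coincides with the Jacobi symbol `J(· | p)`.) -/
theorem stmt4 (m : ℕ) (hm : 0 < m) :
    ∃ P : Fin m → ℕ, Function.Injective P ∧
      (∀ i, (P i).Prime ∧ P i % 4 = 1) ∧
      ∀ i j, i ≠ j → jacobiSym (-(P j : ℤ)) (P i) = -1 :=
  stmt4_general m
end

section
/- Let d be a quadratic discriminant and let 𝔞 = aℤ + ((b+√d)/2)ℤ be a primitive ideal of the quadratic order O_d with gcd(a, d) = 1 (here a = N(𝔞)). Then for every positive integer t the ideal 𝔞^t is primitive. -/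
set_option synthInstance.maxHeartbeats 1000000
set_option maxHeartbeats 1000000

/-- `ω_d = √d/2` if `d ≡ 0 (mod 4)`, and `ω_d = (1+√d)/2` if `d ≡ 1 (mod 4)`. -/
noncomputable def omegaD (d : ℕ) : ℝ :=
  if d % 4 = 0 then Real.sqrt d / 2 else (1 + Real.sqrt d) / 2

/-- The quadratic order `O_d = ℤ[ω_d]`, as a subring of `ℝ`. -/
noncomputable def Od (d : ℕ) : Subalgebra ℤ ℝ := Algebra.adjoin ℤ {omegaD d}

/-- An ideal of `O_d` is *primitive* if it is not contained in `m·O_d` for any integer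
`m ≥ 2`. -/
noncomputable def IsPrimitiveIdeal (d : ℕ) (𝔞 : Ideal (Od d)) : Prop :=
  ∀ k : ℕ, 2 ≤ k → ¬ (𝔞 ≤ Ideal.span {(k : Od d)})


/-!
Write `x = (b + √d)/2`. If `𝔞^t ⊆ p·O_d` for a prime `p`, then `a^(t-1) x ∈ 𝔞^t` forces `p ∣ a`,
since the `√d`-coefficient of an element of `p·O_d` is divisible by `p`. The relation
`x² = b x - N(x)` with `N(x) = (b² - d)/4 ∈ aℤ` then gives `x^t ≡ b^(t-1) x (mod p)`, hence `p ∣ b`,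
and so `p ∣ b² - 4 N(x) = d`, contradicting `gcd(a, d) = 1`.
-/

open Real

theorem Irrational.intCast_add_intCast_mul_eq_zero_iff {s : ℝ} (hs : Irrational s) {A B : ℤ} :
    (A : ℝ) + B * s = 0 ↔ A = 0 ∧ B = 0 := by
  refine ⟨fun h => ?_, fun ⟨hA, hB⟩ => by simp [hA, hB]⟩
  obtain rfl : B = 0 := by
    by_contra hB
    exact ((hs.intCast_mul hB).intCast_add A).ne_zero h
  exact ⟨by simpa using h, rfl⟩

theorem Ideal.pow_succ_sub_pow_mul_mem {R : Type*} [CommRing R] {I : Ideal R} {x c : R}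
    (h : x ^ 2 - c * x ∈ I) (n : ℕ) : x ^ (n + 1) - c ^ n * x ∈ I := by
  induction n with
  | zero => simp
  | succ n ih =>
    have key : x ^ (n + 2) - c ^ (n + 1) * x =
        x * (x ^ (n + 1) - c ^ n * x) + c ^ n * (x ^ 2 - c * x) := by
      ring
    rw [key]
    exact I.add_mem (I.mul_mem_left _ ih) (I.mul_mem_left _ h)

section QuadraticOrder

variable {d : ℕ}

theorem omegaD_eq (hmod : d % 4 = 0 ∨ d % 4 = 1) :
    omegaD d = ((d % 4 : ℕ) + √d) / 2 := by
  rcases hmod with h | h <;> simp [omegaD, h]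

theorem omegaD_sq (hmod : d % 4 = 0 ∨ d % 4 = 1) :
    omegaD d ^ 2 = (d / 4 : ℕ) + (d % 4 : ℕ) * omegaD d := by
  have hd : (d : ℝ) = 4 * (d / 4 : ℕ) + (d % 4 : ℕ) := mod_cast (Nat.div_add_mod d 4).symm
  have hsq : √d ^ 2 = d := sq_sqrt (Nat.cast_nonneg d)
  rw [omegaD_eq hmod]
  rcases hmod with h | h <;> rw [h] at hd ⊢ <;> push_cast at hd ⊢ <;>
    linear_combination hsq / 4 + hd / 4

theorem exists_eq_intCast_add_mul_omegaD (hmod : d % 4 = 0 ∨ d % 4 = 1) (z : Od d) :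
    ∃ m n : ℤ, (z : ℝ) = m + n * omegaD d := by
  obtain ⟨z, hz⟩ := z
  change ∃ m n : ℤ, z = m + n * omegaD d
  induction hz using Algebra.adjoin_induction with
  | mem x hx =>
    rw [Set.mem_singleton_iff.mp hx]
    exact ⟨0, 1, by simp⟩
  | algebraMap i => exact ⟨i, 0, by simp⟩
  | add x y _ _ ihx ihy =>
    obtain ⟨m, n, rfl⟩ := ihx
    obtain ⟨m', n', rfl⟩ := ihy
    exact ⟨m + m', n + n', by push_cast; ring⟩
  | mul x y _ _ ihx ihy =>
    obtain ⟨m, n, rfl⟩ := ihx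
    obtain ⟨m', n', rfl⟩ := ihy
    refine ⟨m * m' + n * n' * ((d / 4 : ℕ) : ℤ), m * n' + m' * n + n * n' * ((d % 4 : ℕ) : ℤ), ?_⟩
    simp only [Int.cast_add, Int.cast_mul, Int.cast_natCast]
    linear_combination (n : ℝ) * n' * omegaD_sq hmod

theorem dvd_of_mem_span_intCast (hmod : d % 4 = 0 ∨ d % 4 = 1) (hirr : Irrational √d)
    {k A B : ℤ} {z : Od d} (hz : (z : ℝ) = (A + B * √d) / 2)
    (hk : z ∈ Ideal.span {(k : Od d)}) : k ∣ B := by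
  obtain ⟨w, rfl⟩ := Ideal.mem_span_singleton'.mp hk
  obtain ⟨m, n, hw⟩ := exists_eq_intCast_add_mul_omegaD hmod w
  have hsplit :
      ((A - k * (2 * m + n * ((d % 4 : ℕ) : ℤ)) : ℤ) : ℝ) + ((B - k * n : ℤ) : ℝ) * √d = 0 := by
    simp only [MulMemClass.coe_mul, SubringClass.coe_intCast] at hz
    simp only [Int.cast_add, Int.cast_sub, Int.cast_mul, Int.cast_ofNat, Int.cast_natCast]
    rw [hw, omegaD_eq hmod] at hz
    linear_combination -2 * hz
  exact ⟨n, by linarith [(hirr.intCast_add_intCast_mul_eq_zero_iff.mp hsplit).2]⟩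

theorem dvd_of_intCast_mul_mem_span (hmod : d % 4 = 0 ∨ d % 4 = 1) (hirr : Irrational √d)
    {b g k : ℤ} {x : Od d} (hx : (x : ℝ) = (b + √d) / 2)
    (h : (g : Od d) * x ∈ Ideal.span {(k : Od d)}) : k ∣ g :=
  dvd_of_mem_span_intCast hmod hirr (A := g * b) (by push_cast; rw [hx]; ring) h

theorem coe_sq_sub_mul_of_coe_eq {b : ℤ} {x : Od d} (hx : (x : ℝ) = (b + √d) / 2) :
    ((x ^ 2 - b * x : Od d) : ℝ) = (d - b ^ 2) / 4 := by
  push_cast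
  rw [hx]
  linear_combination sq_sqrt (Nat.cast_nonneg d) / 4

theorem sq_sub_mul_eq_of_coe_eq {a b u : ℤ} {x : Od d} (hx : (x : ℝ) = (b + √d) / 2)
    (hu : b ^ 2 - d = 4 * a * u) : x ^ 2 - b * x = -((a * u : ℤ) : Od d) := by
  apply Subtype.ext
  rw [coe_sq_sub_mul_of_coe_eq hx]
  have hu' : ((b ^ 2 - d : ℤ) : ℝ) = ((4 * a * u : ℤ) : ℝ) := congrArg _ hu
  push_cast at hu' ⊢
  linear_combination -hu' / 4

end QuadraticOrder

section IdealOfStandardForm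

def halfIntLattice (d : ℕ) (a b : ℤ) : Set ℝ := {r | ∃ u v : ℤ, r = a * u + (b + √d) / 2 * v}

variable {d : ℕ} {a b : ℤ} {𝔞 : Ideal (Od d)}

theorem mem_iff_of_image_eq
    (hform : (fun x : Od d => (x : ℝ)) '' (𝔞 : Set (Od d)) = halfIntLattice d a b) {z : Od d} :
    z ∈ 𝔞 ↔ ∃ u v : ℤ, (z : ℝ) = a * u + (b + √d) / 2 * v :=
  (Subtype.val_injective.mem_set_image (s := (𝔞 : Set (Od d)))).symm.trans
    (Set.ext_iff.mp hform z)

theorem intCast_mem_of_image_eq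
    (hform : (fun x : Od d => (x : ℝ)) '' (𝔞 : Set (Od d)) = halfIntLattice d a b) :
    (a : Od d) ∈ 𝔞 :=
  (mem_iff_of_image_eq hform).mpr ⟨1, 0, by simp⟩

theorem exists_mem_coe_eq_of_image_eq
    (hform : (fun x : Od d => (x : ℝ)) '' (𝔞 : Set (Od d)) = halfIntLattice d a b) :
    ∃ x ∈ 𝔞, (x : ℝ) = (b + √d) / 2 :=
  (Set.ext_iff.mp hform _).mpr ⟨0, 1, by simp⟩

/-- `(b² - d)/4`, the norm of `(b + √d)/2`, lies in `𝔞 ∩ ℤ = aℤ`. -/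
theorem exists_sq_sub_eq_four_mul_of_image_eq (hirr : Irrational √d)
    (hform : (fun x : Od d => (x : ℝ)) '' (𝔞 : Set (Od d)) = halfIntLattice d a b) :
    ∃ u : ℤ, b ^ 2 - d = 4 * a * u := by
  obtain ⟨x, hx𝔞, hx⟩ := exists_mem_coe_eq_of_image_eq hform
  have hmem : x ^ 2 - b * x ∈ 𝔞 :=
    𝔞.sub_mem (𝔞.pow_mem_of_mem hx𝔞 2 two_pos) (𝔞.mul_mem_left _ hx𝔞)
  obtain ⟨u, v, huv⟩ := (mem_iff_of_image_eq hform).mp hmem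
  rw [coe_sq_sub_mul_of_coe_eq hx] at huv
  have hsplit : ((b ^ 2 - d + 4 * a * u + 2 * b * v : ℤ) : ℝ) + ((2 * v : ℤ) : ℝ) * √d = 0 := by
    push_cast
    linear_combination -4 * huv
  obtain ⟨hrat, hv⟩ := hirr.intCast_add_intCast_mul_eq_zero_iff.mp hsplit
  obtain rfl : v = 0 := by omega
  exact ⟨-u, by linarith⟩

end IdealOfStandardForm

theorem stmt13_general (d : ℕ) (hd : ¬ IsSquare d) (hmod : d % 4 = 0 ∨ d % 4 = 1)
    (a b : ℤ) (𝔞 : Ideal (Od d))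
    (hform : (fun x : Od d => (x : ℝ)) '' (𝔞 : Set (Od d)) =
      {r : ℝ | ∃ u v : ℤ, r = a * u + (b + Real.sqrt d) / 2 * v})
    (hgcd : Int.gcd a d = 1)
    (t : ℕ) (ht : 0 < t) :
    IsPrimitiveIdeal d (𝔞 ^ t) := by
  intro k hk hle
  obtain ⟨p, hp, hpk⟩ := Nat.exists_prime_and_dvd (show k ≠ 1 by omega)
  have hpZ : Prime (p : ℤ) := Nat.prime_iff_prime_int.mp hp
  have hirr : Irrational √d := irrational_sqrt_natCast_iff.mpr hd
  set I := Ideal.span {((p : ℤ) : Od d)}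
  have hleI : 𝔞 ^ t ≤ I := hle.trans <| Ideal.span_singleton_le_span_singleton.mpr <| by
    rw [Int.cast_natCast]
    exact Nat.cast_dvd_cast hpk
  obtain ⟨x, hx𝔞, hx⟩ := exists_mem_coe_eq_of_image_eq hform
  obtain ⟨u, hu⟩ := exists_sq_sub_eq_four_mul_of_image_eq hirr hform
  obtain ⟨s, rfl⟩ : ∃ s, t = s + 1 := ⟨t - 1, by omega⟩
  have hpa : (p : ℤ) ∣ a := by
    refine hpZ.dvd_of_dvd_pow (n := s) (dvd_of_intCast_mul_mem_span hmod hirr hx (hleI ?_))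
    rw [pow_succ, Int.cast_pow]
    exact Ideal.mul_mem_mul (Ideal.pow_mem_pow (intCast_mem_of_image_eq hform) s) hx𝔞
  have hpb : (p : ℤ) ∣ b := by
    have hrel : x ^ 2 - b * x ∈ I := by
      rw [sq_sub_mul_eq_of_coe_eq hx hu]
      exact I.neg_mem (Ideal.mem_span_singleton.mpr (Int.cast_dvd_cast _ _ (hpa.mul_right u)))
    have hmem := I.sub_mem (hleI (Ideal.pow_mem_pow hx𝔞 _)) (Ideal.pow_succ_sub_pow_mul_mem hrel s)
    rw [sub_sub_cancel, ← Int.cast_pow] at hmem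
    exact hpZ.dvd_of_dvd_pow (dvd_of_intCast_mul_mem_span hmod hirr hx hmem)
  have hpd : (p : ℤ) ∣ d := by
    rw [show (d : ℤ) = b ^ 2 - 4 * a * u by linarith]
    exact dvd_sub (dvd_pow hpb two_ne_zero) ((hpa.mul_left 4).mul_right u)
  have hp1 : (p : ℤ) ∣ 1 := by simpa [hgcd] using Int.dvd_coe_gcd hpa hpd
  exact hpZ.not_isUnit (isUnit_of_dvd_one hp1)

theorem stmt13 (d : ℕ) (hd : ¬ IsSquare d) (hmod : d % 4 = 0 ∨ d % 4 = 1)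
    (a b : ℤ) (ha : 0 < a) (𝔞 : Ideal (Od d))
    (hform : (fun x : Od d => (x : ℝ)) '' (𝔞 : Set (Od d)) =
      {r : ℝ | ∃ u v : ℤ, r = a * u + (b + Real.sqrt d) / 2 * v})
    (hnorm : Nat.card (Od d ⧸ 𝔞) = a.toNat)
    (hprim : IsPrimitiveIdeal d 𝔞) (hgcd : Int.gcd a d = 1)
    (t : ℕ) (ht : 0 < t) :
    IsPrimitiveIdeal d (𝔞 ^ t) :=
  stmt13_general d hd hmod a b 𝔞 hform hgcd t ht
end

section
/- Let m ≥ 1 and let n_1, …, n_m be integers ≥ 2. For y > 0 put G(y) = {(x_1, …, x_m) ∈ ℝ^m : x_i ≥ 0 for all i, Σ_{i=1}^m x_i log n_i ≤ y}. Then there exist C > 0 and D₀ > 0 such that for all real d ≥ D₀, writing y = log(√d/2), | Σ_{(e_1,…,e_m) ∈ ℤ^m ∩ G(y)} ( y − Σ_{i=1}^m e_i log n_i ) − ∫_{G(y)} ( y − Σ_{i=1}^m x_i log n_i ) dx_1 … dx_m | ≤ C·(log d)^m. -/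
/-!
Write `y = log (√d / 2)` and `w i = log (n i)`. Summand and integrand are values of the tent
function `f_y x = (y - ∑ i, x i * w i)⁺` on the nonnegative orthant, which is tiled by the unit
cubes `[e, e + 1)`, `e ∈ ℕ^m`. The tent function is antitone and `f_{y+L} (x + 1) = f_y x` with
`L = ∑ i, w i`, so comparing on each cube gives `∫ f_y ≤ ∑ f_y(e) ≤ ∫ f_{y+L}`. Both tents vanish
outside the box `[0, (y + L) / log 2]^m`, where their difference is at most `L`, so the error is
at most `L ((y + L) / log 2)^m = O((log d)^m)`.
-/

open MeasureTheory Set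

variable {ι : Type*}

section UnitCube

def unitCube (e : ι → ℕ) : Set (ι → ℝ) := univ.pi fun i => Ico (e i : ℝ) (e i + 1)

lemma mem_unitCube_iff {x : ι → ℝ} {e : ι → ℕ} :
    x ∈ unitCube e ↔ 0 ≤ x ∧ (fun i => ⌊x i⌋₊) = e := by
  simp only [unitCube, mem_univ_pi, mem_Ico, Pi.le_def, Pi.zero_apply, funext_iff]
  refine ⟨fun h => ?_, fun ⟨h0, he⟩ i => (Nat.floor_eq_iff (h0 i)).1 (he i)⟩
  have h0 : ∀ i, 0 ≤ x i := fun i => (Nat.cast_nonneg _).trans (h i).1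
  exact ⟨h0, fun i => (Nat.floor_eq_iff (h0 i)).2 (h i)⟩

lemma iUnion_unitCube : ⋃ e : ι → ℕ, unitCube e = Ici 0 := by
  ext x
  simp [mem_unitCube_iff]

lemma unitCube_subset_Ici (e : ι → ℕ) : unitCube e ⊆ Ici 0 :=
  iUnion_unitCube (ι := ι) ▸ subset_iUnion unitCube e

lemma pairwise_disjoint_unitCube : Pairwise (Function.onFun Disjoint (unitCube (ι := ι))) :=
  fun _ _ hne => disjoint_left.2 fun _ hx hx' =>
    hne ((mem_unitCube_iff.1 hx).2.symm.trans (mem_unitCube_iff.1 hx').2)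

lemma natCast_le_of_mem_unitCube {x : ι → ℝ} {e : ι → ℕ} (hx : x ∈ unitCube e) :
    (fun i => (e i : ℝ)) ≤ x :=
  fun i => (hx i trivial).1

lemma le_natCast_add_one_of_mem_unitCube {x : ι → ℝ} {e : ι → ℕ} (hx : x ∈ unitCube e) :
    x ≤ (fun i => (e i : ℝ)) + 1 :=
  fun i => (hx i trivial).2.le

variable [Fintype ι]

lemma measurableSet_unitCube (e : ι → ℕ) : MeasurableSet (unitCube e) :=
  MeasurableSet.univ_pi fun _ => measurableSet_Ico

lemma volume_unitCube (e : ι → ℕ) : volume (unitCube e) = 1 := by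
  simp [unitCube, Real.volume_pi_Ico]

variable {E : Type*} [NormedAddCommGroup E] [NormedSpace ℝ E]

lemma hasSum_integral_unitCube {f : (ι → ℝ) → E} (hf : IntegrableOn f (Ici 0)) :
    HasSum (fun e => ∫ x in unitCube e, f x) (∫ x in Ici 0, f x) := by
  rw [← iUnion_unitCube] at hf ⊢
  exact hasSum_integral_iUnion measurableSet_unitCube pairwise_disjoint_unitCube hf

lemma setIntegral_unitCube_le {f : (ι → ℝ) → ℝ} {e : ι → ℕ} {a : ℝ}
    (hf : IntegrableOn f (unitCube e)) (h : ∀ x ∈ unitCube e, f x ≤ a) :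
    ∫ x in unitCube e, f x ≤ a := by
  have hfin : volume (unitCube e) ≠ ⊤ := by simp [volume_unitCube]
  calc ∫ x in unitCube e, f x ≤ ∫ _ in unitCube e, a :=
        setIntegral_mono_on hf (integrableOn_const hfin) (measurableSet_unitCube e) h
    _ = a := by
      rw [setIntegral_const, measureReal_def, volume_unitCube, ENNReal.toReal_one, one_smul]

lemma le_setIntegral_unitCube {f : (ι → ℝ) → ℝ} {e : ι → ℕ} {a : ℝ}
    (hf : IntegrableOn f (unitCube e)) (h : ∀ x ∈ unitCube e, a ≤ f x) :
    a ≤ ∫ x in unitCube e, f x := by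
  simpa [measureReal_def, volume_unitCube] using
    setIntegral_ge_of_const_le_real (measurableSet_unitCube e) (by simp [volume_unitCube]) h hf

end UnitCube

section Tent

variable [Fintype ι]

def tent (w : ι → ℝ) (t : ℝ) (x : ι → ℝ) : ℝ := max (t - ∑ i, x i * w i) 0

variable {w : ι → ℝ} {t c : ℝ}

lemma continuous_tent : Continuous (tent w t) := by
  unfold tent
  fun_prop

lemma antitone_tent (hw : 0 ≤ w) : Antitone (tent w t) := fun _ _ hxy =>
  max_le_max_right _ <| sub_le_sub_left
    (Finset.sum_le_sum fun i _ => mul_le_mul_of_nonneg_right (hxy i) (hw i)) t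

lemma tent_add_one (x : ι → ℝ) : tent w (t + ∑ i, w i) (x + 1) = tent w t x := by
  simp only [tent, Pi.add_apply, Pi.one_apply, add_mul, one_mul, Finset.sum_add_distrib]
  ring_nf

lemma tent_add_le {s : ℝ} (hs : 0 ≤ s) (x : ι → ℝ) : tent w (t + s) x ≤ tent w t x + s := by
  unfold tent
  exact max_le (by linarith [le_max_left (t - ∑ i, x i * w i) 0])
    (by linarith [le_max_right (t - ∑ i, x i * w i) 0])

lemma tent_eq_zero_of_notMem_Icc (hc : 0 < c) (hw : ∀ i, c ≤ w i) {R : ℝ} (hR : t ≤ c * R)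
    {x : ι → ℝ} (hx : 0 ≤ x) (hxR : x ∉ Icc 0 fun _ => R) : tent w t x = 0 := by
  obtain ⟨i, hi⟩ : ∃ i, R < x i := by
    by_contra! h
    exact hxR ⟨hx, h⟩
  have hw0 : 0 ≤ w := fun j => hc.le.trans (hw j)
  have : t ≤ ∑ j, x j * w j := calc
    t ≤ c * R := hR
    _ ≤ c * x i := mul_le_mul_of_nonneg_left hi.le hc.le
    _ ≤ x i * w i := by rw [mul_comm]; exact mul_le_mul_of_nonneg_left (hw i) (hx i)
    _ ≤ ∑ j, x j * w j :=
      Finset.single_le_sum (fun j _ => mul_nonneg (hx j) (hw0 j)) (Finset.mem_univ i)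
  exact max_eq_right (by linarith)

lemma setIntegral_Ici_tent (hc : 0 < c) (hw : ∀ i, c ≤ w i) {R : ℝ} (hR : t ≤ c * R) :
    ∫ x in Ici 0, tent w t x = ∫ x in Icc 0 (fun _ => R), tent w t x :=
  setIntegral_eq_of_subset_of_forall_sdiff_eq_zero measurableSet_Ici Icc_subset_Ici_self
    fun _ ⟨hx, hxR⟩ => tent_eq_zero_of_notMem_Icc hc hw hR hx hxR

lemma integrableOn_tent (hc : 0 < c) (hw : ∀ i, c ≤ w i) (t : ℝ) :
    IntegrableOn (tent w t) (Ici 0) :=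
  continuous_tent.integrableOn_Icc.of_forall_sdiff_eq_zero measurableSet_Ici
    fun _ ⟨hx, hxR⟩ =>
      tent_eq_zero_of_notMem_Icc hc hw (mul_div_cancel₀ t hc.ne').ge hx hxR

lemma integral_tent_add_sub_le (hc : 0 < c) (hw : ∀ i, c ≤ w i) {s : ℝ} (ht : 0 ≤ t)
    (hs : 0 ≤ s) :
    (∫ x in Ici 0, tent w (t + s) x) - ∫ x in Ici 0, tent w t x ≤
      s * ((t + s) / c) ^ Fintype.card ι := by
  set R := (t + s) / c
  have hR : t + s ≤ c * R := (mul_div_cancel₀ _ hc.ne').ge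
  have hR0 : 0 ≤ R := by positivity
  rw [setIntegral_Ici_tent hc hw hR, setIntegral_Ici_tent hc hw (hR.trans' (by linarith)),
    ← integral_sub continuous_tent.integrableOn_Icc continuous_tent.integrableOn_Icc]
  calc ∫ x in Icc 0 (fun _ => R), (tent w (t + s) x - tent w t x)
      ≤ ∫ _ in Icc (0 : ι → ℝ) (fun _ => R), s :=
        setIntegral_mono_on (continuous_tent.sub continuous_tent).integrableOn_Icc
          continuous_const.integrableOn_Icc measurableSet_Icc
          fun x _ => sub_le_iff_le_add'.2 (tent_add_le hs x)
    _ = s * R ^ Fintype.card ι := by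
        rw [setIntegral_const, Measure.real, Real.volume_Icc_pi_toReal (a := 0) fun _ => hR0]
        simp [mul_comm]

theorem abs_tsum_tent_sub_integral_le (hc : 0 < c) (hw : ∀ i, c ≤ w i) (ht : 0 ≤ t) :
    |(∑' e : ι → ℕ, tent w t (fun i => e i)) - ∫ x in Ici 0, tent w t x| ≤
      (∑ i, w i) * ((t + ∑ i, w i) / c) ^ Fintype.card ι := by
  set L := ∑ i, w i
  have hw0 : 0 ≤ w := fun i => hc.le.trans (hw i)
  have hcube (s : ℝ) (e : ι → ℕ) : IntegrableOn (tent w s) (unitCube e) :=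
    (integrableOn_tent hc hw s).mono_set (unitCube_subset_Ici e)
  have lower (e : ι → ℕ) : ∫ x in unitCube e, tent w t x ≤ tent w t (fun i => e i) :=
    setIntegral_unitCube_le (hcube t e) fun _ hx =>
      antitone_tent hw0 (natCast_le_of_mem_unitCube hx)
  have upper (e : ι → ℕ) : tent w t (fun i => e i) ≤ ∫ x in unitCube e, tent w (t + L) x :=
    le_setIntegral_unitCube (hcube _ e) fun _ hx =>
      (tent_add_one _).symm.trans_le (antitone_tent hw0 (le_natCast_add_one_of_mem_unitCube hx))
  have hcubes (s : ℝ) := hasSum_integral_unitCube (integrableOn_tent hc hw s)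
  have hsummable : Summable fun e : ι → ℕ => tent w t (fun i => e i) :=
    .of_nonneg_of_le (fun _ => le_max_right _ _) upper (hcubes (t + L)).summable
  have hint_le_sum : ∫ x in Ici 0, tent w t x ≤ ∑' e : ι → ℕ, tent w t (fun i => e i) :=
    (hcubes t).tsum_eq ▸ (hcubes t).summable.tsum_le_tsum lower hsummable
  have hsum_le_int : ∑' e : ι → ℕ, tent w t (fun i => e i) ≤ ∫ x in Ici 0, tent w (t + L) x :=
    (hcubes (t + L)).tsum_eq ▸ hsummable.tsum_le_tsum upper (hcubes (t + L)).summable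
  have hgap := integral_tent_add_sub_le (s := L) hc hw ht (Finset.sum_nonneg fun i _ => hw0 i)
  rw [abs_of_nonneg (by linarith)]
  linarith

lemma tsum_subtype_eq_tsum_tent (w : ι → ℝ) (t : ℝ) :
    ∑' e : {e : ι → ℕ // ∑ i, (e i : ℝ) * w i ≤ t}, (t - ∑ i, ((e : ι → ℕ) i : ℝ) * w i) =
      ∑' e : ι → ℕ, tent w t (fun i => e i) := by
  refine (tsum_subtype {e : ι → ℕ | ∑ i, (e i : ℝ) * w i ≤ t}
    fun e => t - ∑ i, (e i : ℝ) * w i).trans (tsum_congr fun e => ?_)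
  simp only [indicator_apply, mem_ofPred_eq, tent]
  split_ifs with he
  · exact (max_eq_left (sub_nonneg.2 he)).symm
  · exact (max_eq_right (sub_nonpos.2 (not_le.1 he).le)).symm

lemma setIntegral_simplex_eq_setIntegral_tent (w : ι → ℝ) (t : ℝ) :
    ∫ x in {x : ι → ℝ | (∀ i, 0 ≤ x i) ∧ ∑ i, x i * w i ≤ t}, (t - ∑ i, x i * w i) =
      ∫ x in Ici 0, tent w t x := by
  have hmeas : MeasurableSet {x : ι → ℝ | (∀ i, 0 ≤ x i) ∧ ∑ i, x i * w i ≤ t} :=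
    (measurableSet_Ici (a := (0 : ι → ℝ))).inter
      (measurableSet_le (f := fun x : ι → ℝ => ∑ i, x i * w i) (by fun_prop) measurable_const)
  rw [setIntegral_eq_of_subset_of_forall_sdiff_eq_zero measurableSet_Ici (fun _ hx => hx.1)
    fun x ⟨hx, hxS⟩ => max_eq_right (sub_nonpos.2 (not_le.1 (not_and.1 hxS hx)).le)]
  exact setIntegral_congr_fun hmeas fun x hx => (max_eq_left (sub_nonneg.2 hx.2)).symm

end Tent

theorem stmt15_general (m : ℕ) (n : Fin m → ℕ) (hn : ∀ i, 2 ≤ n i) :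
    ∃ C > (0:ℝ), ∃ D₀ > (0:ℝ), ∀ d : ℝ, D₀ ≤ d →
      |(∑' e : {e : Fin m → ℕ //
            ∑ i, (e i : ℝ) * Real.log (n i) ≤ Real.log (Real.sqrt d / 2)},
          (Real.log (Real.sqrt d / 2) - ∑ i, ((e : Fin m → ℕ) i : ℝ) * Real.log (n i))) -
        ∫ x in {x : Fin m → ℝ | (∀ i, 0 ≤ x i) ∧
            ∑ i, x i * Real.log (n i) ≤ Real.log (Real.sqrt d / 2)},
          (Real.log (Real.sqrt d / 2) - ∑ i, x i * Real.log (n i)) ∂volume| ≤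
      C * (Real.log d) ^ m := by
  have hlog2 : 0 < Real.log 2 := Real.log_pos one_lt_two
  have hw (i : Fin m) : Real.log 2 ≤ Real.log (n i) :=
    Real.log_le_log two_pos (by exact_mod_cast hn i)
  set L := ∑ i, Real.log (n i)
  have hL : 0 ≤ L := Finset.sum_nonneg fun i _ => hlog2.le.trans (hw i)
  refine ⟨L / Real.log 2 ^ m + 1, by positivity, Real.exp (2 * L + 2), Real.exp_pos _,
    fun d hd => ?_⟩
  have hd0 : 0 < d := (Real.exp_pos _).trans_le hd
  have hd : 2 * L + 2 ≤ Real.log d := (Real.le_log_iff_exp_le hd0).2 hd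
  have hy : Real.log (Real.sqrt d / 2) = Real.log d / 2 - Real.log 2 := by
    rw [Real.log_div (by positivity) two_ne_zero, Real.log_sqrt hd0.le]
  have hlog2_lt : Real.log 2 < 1 := Real.log_two_lt_d9.trans (by norm_num)
  have hy_nonneg : 0 ≤ (Real.log (Real.sqrt d / 2) + L) / Real.log 2 := by
    rw [hy]
    exact div_nonneg (by linarith) hlog2.le
  rw [tsum_subtype_eq_tsum_tent, setIntegral_simplex_eq_setIntegral_tent]
  calc _ ≤ L * ((Real.log (Real.sqrt d / 2) + L) / Real.log 2) ^ m := by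
        simpa using abs_tsum_tent_sub_integral_le hlog2 hw (by linarith)
    _ ≤ L * (Real.log d / Real.log 2) ^ m := by gcongr; linarith
    _ = L / Real.log 2 ^ m * Real.log d ^ m := by ring
    _ ≤ (L / Real.log 2 ^ m + 1) * Real.log d ^ m :=
        mul_le_mul_of_nonneg_right (by linarith) (pow_nonneg (by linarith) m)

/-- Lattice-point sum vs. integral over the simplex `G(y)` with `y = log(√d/2)`:
the difference is `O((log d)^m)`. -/
theorem stmt15 (m : ℕ) (hm : 1 ≤ m) (n : Fin m → ℕ) (hn : ∀ i, 2 ≤ n i) :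
    ∃ C > (0:ℝ), ∃ D₀ > (0:ℝ), ∀ d : ℝ, D₀ ≤ d →
      |(∑' e : {e : Fin m → ℕ //
            ∑ i, (e i : ℝ) * Real.log (n i) ≤ Real.log (Real.sqrt d / 2)},
          (Real.log (Real.sqrt d / 2) - ∑ i, ((e : Fin m → ℕ) i : ℝ) * Real.log (n i))) -
        ∫ x in {x : Fin m → ℝ | (∀ i, 0 ≤ x i) ∧
            ∑ i, x i * Real.log (n i) ≤ Real.log (Real.sqrt d / 2)},
          (Real.log (Real.sqrt d / 2) - ∑ i, x i * Real.log (n i)) ∂volume| ≤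
      C * (Real.log d) ^ m :=
  stmt15_general m n hn
end
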